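/- For any X ∈ ℝ^{m×p} with p < m and any M ∈ ℝ^{m×n} with singular values Σ_{11} ≥ ⋯ ≥ Σ_{qq} (q = min(m,n)), one has ‖X Xᵀ − M Mᵀ‖_F² ≥ Σ_{i=p+1}^{q} Σ_{ii}⁴. -/

import Mathlib

open Matrix Finset Filter

/-- Frobenius norm of a real matrix. -/
noncomputable def frob {m n : ℕ} (A : Matrix (Fin m) (Fin n) ℝ) : ℝ :=
  Real.sqrt (∑ i, ∑ j, (A i j) ^ 2)

/-- Nuclear norm: sum of the singular values, i.e. of the square roots of the
eigenvalues of `Aᵀ * A`. -/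
noncomputable def nuclearNorm {m n : ℕ} (A : Matrix (Fin m) (Fin n) ℝ) : ℝ :=
  ∑ i, Real.sqrt ((show (Aᵀ * A).IsHermitian by
    simpa [Matrix.conjTranspose_eq_transpose_of_trivial] using Matrix.isHermitian_conjTranspose_mul_self A).eigenvalues i)

/-- `σ` is the (decreasingly ordered) vector of singular values of a compact SVD of `A`
with inner dimension `q`. -/
def HasSVD {m n q : ℕ} (A : Matrix (Fin m) (Fin n) ℝ) (σ : Fin q → ℝ) : Prop :=
  (∀ i, 0 ≤ σ i) ∧ Antitone σ ∧
    ∃ (U : Matrix (Fin m) (Fin q) ℝ) (V : Matrix (Fin n) (Fin q) ℝ),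
      Uᵀ * U = 1 ∧ Vᵀ * V = 1 ∧ A = U * Matrix.diagonal σ * Vᵀ

lemma exists_W {m p : ℕ} (hpm : p ≤ m) (X : Matrix (Fin m) (Fin p) ℝ) :
    ∃ W : Matrix (Fin m) (Fin (m - p)) ℝ, Wᵀ * W = 1 ∧ Xᵀ * W = 0 := by
  set f : EuclideanSpace ℝ (Fin m) →ₗ[ℝ] (Fin p → ℝ) :=
    (Matrix.mulVecLin Xᵀ).comp (WithLp.linearEquiv 2 ℝ (Fin m → ℝ)).toLinearMap with hf
  set K := LinearMap.ker f with hK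
  have hrank : m - p ≤ Module.finrank ℝ K := by
    have h1 := LinearMap.finrank_range_add_finrank_ker f
    have h2 : Module.finrank ℝ (LinearMap.range f) ≤ p := by
      have := Submodule.finrank_le (LinearMap.range f)
      rwa [Module.finrank_fin_fun] at this
    rw [finrank_euclideanSpace_fin] at h1
    rw [hK]
    omega
  have b := stdOrthonormalBasis ℝ K
  set e : Fin (m - p) → Fin (Module.finrank ℝ K) := Fin.castLE hrank with he
  refine ⟨fun i j => ((b (e j) : K) : EuclideanSpace ℝ (Fin m)) i, ?_, ?_⟩
  · ext j k
    have horth := orthonormal_iff_ite.mp b.orthonormal (e j) (e k)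
    rw [Submodule.coe_inner, PiLp.inner_apply] at horth
    simp only [RCLike.inner_apply, starRingEnd_apply, star_trivial] at horth
    have hje : e j = e k ↔ j = k := by
      constructor
      · intro h; exact Fin.castLE_injective hrank h
      · intro h; rw [h]
    have horth' : ∑ x, ((b (e j) : K) : EuclideanSpace ℝ (Fin m)) x *
        ((b (e k) : K) : EuclideanSpace ℝ (Fin m)) x = if e j = e k then 1 else 0 := by
      rw [← horth]; exact Finset.sum_congr rfl fun x _ => mul_comm _ _
    change ∑ x, ((b (e j) : K) : EuclideanSpace ℝ (Fin m)) x *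
        ((b (e k) : K) : EuclideanSpace ℝ (Fin m)) x = _
    rw [horth']
    exact if_congr hje rfl rfl
  · ext i j
    have hmem : (b (e j) : EuclideanSpace ℝ (Fin m)) ∈ K := (b (e j)).2
    have h0 : Matrix.mulVec Xᵀ ((b (e j) : K) : EuclideanSpace ℝ (Fin m)) = 0 :=
      LinearMap.mem_ker.mp hmem
    have := congrFun h0 i
    change ∑ x, X x i * ((b (e j) : K) : EuclideanSpace ℝ (Fin m)) x = _
    simpa [Matrix.mul_apply, Matrix.mulVec, dotProduct] using this

lemma trace_transpose_mul_self {a b : ℕ} (A : Matrix (Fin a) (Fin b) ℝ) :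
    Matrix.trace (Aᵀ * A) = ∑ i, ∑ j, (A i j)^2 := by
  rw [Finset.sum_comm]
  simp [Matrix.trace, Matrix.diag, Matrix.mul_apply, sq]

lemma trace_transpose_mul_self_nonneg {a b : ℕ} (A : Matrix (Fin a) (Fin b) ℝ) :
    0 ≤ Matrix.trace (Aᵀ * A) := by
  rw [trace_transpose_mul_self]; positivity

lemma trace_psd_mul_psd {a b c : ℕ} (A : Matrix (Fin b) (Fin a) ℝ) (B : Matrix (Fin c) (Fin a) ℝ) :
    0 ≤ Matrix.trace ((Aᵀ * A) * (Bᵀ * B)) := by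
  have h : (Aᵀ * A) * (Bᵀ * B) = Aᵀ * ((A * Bᵀ) * B) := by
    rw [Matrix.mul_assoc, ← Matrix.mul_assoc A]
  have h2 : Matrix.trace (Aᵀ * ((A * Bᵀ) * B)) = Matrix.trace (((A * Bᵀ) * B) * Aᵀ) :=
    Matrix.trace_mul_comm _ _
  have h3 : ((A * Bᵀ) * B) * Aᵀ = (A * Bᵀ) * (B * Aᵀ) := by rw [Matrix.mul_assoc]
  have h4 : B * Aᵀ = (A * Bᵀ)ᵀ := by rw [Matrix.transpose_mul, Matrix.transpose_transpose]
  have h5 : 0 ≤ Matrix.trace ((A * Bᵀ) * (A * Bᵀ)ᵀ) := by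
    rw [Matrix.trace_mul_comm]; exact trace_transpose_mul_self_nonneg _
  rw [h, h2, h3, h4]; exact h5

lemma trace_mul_diagonal {a : ℕ} (B : Matrix (Fin a) (Fin a) ℝ) (d : Fin a → ℝ) :
    Matrix.trace (B * Matrix.diagonal d) = ∑ i, B i i * d i := by
  simp [Matrix.trace, Matrix.diag, Matrix.mul_apply, Matrix.diagonal]

lemma diag_transpose_mul {a b : ℕ} (A : Matrix (Fin a) (Fin b) ℝ) (i : Fin b) :
    (Aᵀ * A) i i = ∑ x, (A x i)^2 := by
  simp [Matrix.mul_apply, sq]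

lemma diag_mul_transpose {a b : ℕ} (A : Matrix (Fin a) (Fin b) ℝ) (i : Fin a) :
    (A * Aᵀ) i i = ∑ j, (A i j)^2 := by
  simp [Matrix.mul_apply, sq]

-- projection facts
lemma proj_symm {a b : ℕ} (W : Matrix (Fin a) (Fin b) ℝ) :
    ((1 : Matrix (Fin a) (Fin a) ℝ) - W * Wᵀ)ᵀ = 1 - W * Wᵀ := by
  rw [Matrix.transpose_sub, Matrix.transpose_one, Matrix.transpose_mul,
    Matrix.transpose_transpose]

lemma proj_idem {a b : ℕ} (W : Matrix (Fin a) (Fin b) ℝ) (hW : Wᵀ * W = 1) :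
    ((1 : Matrix (Fin a) (Fin a) ℝ) - W * Wᵀ) * (1 - W * Wᵀ) = 1 - W * Wᵀ := by
  have hWWW : (W * Wᵀ) * (W * Wᵀ) = W * Wᵀ := by
    rw [Matrix.mul_assoc, ← Matrix.mul_assoc Wᵀ W, hW, Matrix.one_mul]
  simp [Matrix.sub_mul, Matrix.mul_sub, hWWW]

lemma proj_fact {a b : ℕ} (W : Matrix (Fin a) (Fin b) ℝ) (hW : Wᵀ * W = 1) :
    (1 : Matrix (Fin a) (Fin a) ℝ) - W * Wᵀ =
      ((1 : Matrix (Fin a) (Fin a) ℝ) - W * Wᵀ)ᵀ * (1 - W * Wᵀ) := by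
  rw [proj_symm, proj_idem W hW]


/-- For any `X ∈ ℝ^{m×p}` with `p < m`,
`‖X Xᵀ − M Mᵀ‖_F² ≥ ∑_{i=p+1}^{q} Σᵢᵢ⁴` where `Σᵢᵢ` are the singular values of `M`. -/
theorem frob_sq_lower_bound {m n q p : ℕ}
    (hq : q = min m n) (hpm : p < m)
    (X : Matrix (Fin m) (Fin p) ℝ) (M : Matrix (Fin m) (Fin n) ℝ)
    (σ : Fin q → ℝ) (hM : HasSVD M σ) :
    frob (X * Xᵀ - M * Mᵀ) ^ 2 ≥ ∑ i : Fin q, if p ≤ (i : ℕ) then σ i ^ 4 else 0 := by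
  obtain ⟨hσ0, hσanti, U, V, hUU, hVV, hMeq⟩ := hM
  obtain ⟨W, hW, hXW⟩ := exists_W hpm.le X
  set C := X * Xᵀ - M * Mᵀ with hC
  set G := Uᵀ * W with hG
  set t : Fin q → ℝ := fun i => ∑ j, (G i j)^2 with ht
  -- frob squared is a trace
  have hfrob : frob C ^ 2 = Matrix.trace (Cᵀ * C) := by
    rw [frob, Real.sq_sqrt (by positivity), trace_transpose_mul_self]
  -- M Mᵀ in terms of U
  have hA : M * Mᵀ = U * Matrix.diagonal (fun i => σ i ^ 2) * Uᵀ := by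
    rw [hMeq, Matrix.transpose_mul, Matrix.transpose_mul, Matrix.transpose_transpose,
      Matrix.diagonal_transpose]
    rw [Matrix.mul_assoc (U * Matrix.diagonal σ), ← Matrix.mul_assoc Vᵀ, hVV, Matrix.one_mul,
      ← Matrix.mul_assoc, Matrix.mul_assoc U, Matrix.diagonal_mul_diagonal]
    congr 2
    ext i
    ring
  have hA2 : (M * Mᵀ) * (M * Mᵀ) = U * Matrix.diagonal (fun i => σ i ^ 4) * Uᵀ := by
    rw [hA]
    have h : (U * Matrix.diagonal (fun i => σ i ^ 2) * Uᵀ) *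
        (U * Matrix.diagonal (fun i => σ i ^ 2) * Uᵀ) =
        U * (Matrix.diagonal (fun i => σ i ^ 2) * ((Uᵀ * U) *
          (Matrix.diagonal (fun i => σ i ^ 2) * Uᵀ))) := by
      simp only [Matrix.mul_assoc]
    rw [h, hUU, Matrix.one_mul,
      ← Matrix.mul_assoc (Matrix.diagonal fun i => σ i ^ 2) (Matrix.diagonal fun i => σ i ^ 2) Uᵀ,
      Matrix.diagonal_mul_diagonal, ← Matrix.mul_assoc]
    congr 2
    ext i
    ring
  -- step 1 : trace (Cᵀ C) ≥ trace ((C W)ᵀ (C W))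
  have step1 : Matrix.trace ((C * W)ᵀ * (C * W)) ≤ Matrix.trace (Cᵀ * C) := by
    have h0 : 0 ≤ Matrix.trace ((Cᵀ * C) * (((1 : Matrix (Fin m) (Fin m) ℝ) - W * Wᵀ)ᵀ *
        (1 - W * Wᵀ))) := trace_psd_mul_psd C _
    rw [← proj_fact W hW, Matrix.mul_sub, Matrix.mul_one, Matrix.trace_sub] at h0
    have he : Matrix.trace (Cᵀ * C * (W * Wᵀ)) = Matrix.trace ((C * W)ᵀ * (C * W)) := by
      have h1 : Cᵀ * C * (W * Wᵀ) = (Cᵀ * (C * W)) * Wᵀ := by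
        simp only [Matrix.mul_assoc]
      have h2 : (C * W)ᵀ * (C * W) = Wᵀ * (Cᵀ * (C * W)) := by
        rw [Matrix.transpose_mul]; simp only [Matrix.mul_assoc]
      rw [h1, h2, Matrix.trace_mul_comm]
    linarith
  -- step 2 : trace ((C W)ᵀ (C W)) = ∑ σ i ^ 4 * t i
  have hCW : C * W = -(M * Mᵀ * W) := by
    rw [hC, Matrix.sub_mul, Matrix.mul_assoc X, hXW, Matrix.mul_zero, zero_sub]
  have step2 : Matrix.trace ((C * W)ᵀ * (C * W)) = ∑ i, σ i ^ 4 * t i := by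
    rw [hCW, Matrix.transpose_neg, Matrix.neg_mul, Matrix.mul_neg, neg_neg]
    have h1 : (M * Mᵀ * W)ᵀ * (M * Mᵀ * W) = Wᵀ * (((M * Mᵀ) * (M * Mᵀ)) * W) := by
      rw [Matrix.transpose_mul, Matrix.transpose_mul, Matrix.transpose_transpose]
      simp only [Matrix.mul_assoc]
    rw [h1, hA2]
    have h2 : Wᵀ * ((U * Matrix.diagonal (fun i => σ i ^ 4) * Uᵀ) * W) =
        (Wᵀ * U) * (Matrix.diagonal (fun i => σ i ^ 4) * (Uᵀ * W)) := by
      simp only [Matrix.mul_assoc]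
    rw [h2, Matrix.trace_mul_comm, ← hG]
    have h3 : Matrix.diagonal (fun i => σ i ^ 4) * G * Wᵀ * U =
        Matrix.diagonal (fun i => σ i ^ 4) * (G * Gᵀ) := by
      have hWU : Wᵀ * U = Gᵀ := by rw [hG, Matrix.transpose_mul, Matrix.transpose_transpose]
      rw [Matrix.mul_assoc (Matrix.diagonal (fun i => σ i ^ 4) * G), hWU, Matrix.mul_assoc]
    rw [← Matrix.mul_assoc, h3, Matrix.trace_mul_comm, trace_mul_diagonal]
    refine Finset.sum_congr rfl fun i _ => ?_
    rw [mul_comm, diag_mul_transpose]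
  -- t i ∈ [0, 1]
  have ht0 : ∀ i, 0 ≤ t i := fun i => by positivity
  have ht1 : ∀ i, t i ≤ 1 := by
    intro i
    have hfact : (((1 - W * Wᵀ) * U)ᵀ) * ((1 - W * Wᵀ) * U) =
        (1 : Matrix (Fin q) (Fin q) ℝ) - G * Gᵀ := by
      have h1 : (((1 - W * Wᵀ) * U)ᵀ) * ((1 - W * Wᵀ) * U) =
          Uᵀ * (((1 - W * Wᵀ)ᵀ * (1 - W * Wᵀ)) * U) := by
        rw [Matrix.transpose_mul]
        simp only [Matrix.mul_assoc]
      rw [h1, ← proj_fact W hW, Matrix.sub_mul, Matrix.one_mul, Matrix.mul_sub, hUU]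
      congr 1
      rw [hG, Matrix.transpose_mul, Matrix.transpose_transpose]
      simp only [Matrix.mul_assoc]
    have hdiag : (((((1 - W * Wᵀ) * U)ᵀ) * ((1 - W * Wᵀ) * U) : Matrix (Fin q) (Fin q) ℝ)) i i =
        ((1 : Matrix (Fin q) (Fin q) ℝ) - G * Gᵀ) i i := by rw [hfact]
    rw [diag_transpose_mul] at hdiag
    have hR : ((1 : Matrix (Fin q) (Fin q) ℝ) - G * Gᵀ) i i = 1 - t i := by
      rw [Matrix.sub_apply, Matrix.one_apply_eq, diag_mul_transpose]
    rw [hR] at hdiag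
    have h3 : (0:ℝ) ≤ ∑ x, ((((1 - W * Wᵀ) * U : Matrix (Fin m) (Fin q) ℝ)) x i)^2 := by
      positivity
    linarith
  -- ∑ t ≥ q - p
  have htsum : (q : ℝ) - (p : ℝ) ≤ ∑ i, t i := by
    have hPQ : 0 ≤ Matrix.trace ((((1 : Matrix (Fin m) (Fin m) ℝ) - U * Uᵀ)ᵀ * (1 - U * Uᵀ)) *
        (((1 : Matrix (Fin m) (Fin m) ℝ) - W * Wᵀ)ᵀ * (1 - W * Wᵀ))) :=
      trace_psd_mul_psd _ _
    rw [← proj_fact U hUU, ← proj_fact W hW] at hPQ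
    have hexp : ((1 : Matrix (Fin m) (Fin m) ℝ) - U * Uᵀ) * (1 - W * Wᵀ) =
        1 - U * Uᵀ - W * Wᵀ + (U * Uᵀ) * (W * Wᵀ) := by
      noncomm_ring
    rw [hexp] at hPQ
    rw [Matrix.trace_add, Matrix.trace_sub, Matrix.trace_sub, Matrix.trace_one] at hPQ
    have htrU : Matrix.trace (U * Uᵀ) = (q : ℝ) := by
      rw [Matrix.trace_mul_comm, hUU, Matrix.trace_one]
      simp
    have htrW : Matrix.trace (W * Wᵀ) = ((m - p : ℕ) : ℝ) := by
      rw [Matrix.trace_mul_comm, hW, Matrix.trace_one]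
      simp
    have htrUW : Matrix.trace ((U * Uᵀ) * (W * Wᵀ)) = ∑ i, t i := by
      have h1 : (U * Uᵀ) * (W * Wᵀ) = U * ((Uᵀ * W) * Wᵀ) := by
        simp only [Matrix.mul_assoc]
      rw [h1, Matrix.trace_mul_comm, ← hG]
      have h2 : G * Wᵀ * U = G * Gᵀ := by
        have : Wᵀ * U = Gᵀ := by rw [hG, Matrix.transpose_mul, Matrix.transpose_transpose]
        rw [Matrix.mul_assoc, this]
      rw [h2]
      simp only [Matrix.trace, Matrix.diag, Matrix.mul_apply, ht]
      refine Finset.sum_congr rfl fun i _ => ?_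
      refine Finset.sum_congr rfl fun j _ => ?_
      simp [sq]
    rw [htrU, htrW, htrUW] at hPQ
    have hcast : ((m - p : ℕ) : ℝ) = (m : ℝ) - (p : ℝ) := by
      rw [Nat.cast_sub hpm.le]
    have hcardm : (Fintype.card (Fin m) : ℝ) = (m : ℝ) := by simp
    rw [hcardm, hcast] at hPQ
    linarith
  -- combine
  rw [ge_iff_le, hfrob]
  have hmain : ∑ i, σ i ^ 4 * t i ≤ Matrix.trace (Cᵀ * C) := by
    rw [← step2]; exact step1
  refine le_trans ?_ hmain
  -- final scalar inequality
  by_cases hpq : p < q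
  · set s : ℝ := σ ⟨p, hpq⟩ ^ 4 with hs
    have hs0 : 0 ≤ s := by positivity
    have hkey : ∀ i : Fin q, (if p ≤ (i : ℕ) then σ i ^ 4 else 0) +
        s * (t i - (if p ≤ (i : ℕ) then 1 else 0)) ≤ σ i ^ 4 * t i := by
      intro i
      by_cases hi : p ≤ (i : ℕ)
      · simp only [hi, if_pos]
        have hle : σ i ≤ σ ⟨p, hpq⟩ := hσanti (by simpa [Fin.le_def] using hi)
        have h4 : σ i ^ 4 ≤ s := by
          rw [hs]; exact pow_le_pow_left₀ (hσ0 i) hle 4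
        have hti : t i - 1 ≤ 0 := by linarith [ht1 i]
        nlinarith
      · simp only [hi, if_neg, not_false_iff]
        have hle : σ ⟨p, hpq⟩ ≤ σ i := hσanti (by simp only [Fin.le_def]; omega)
        have h4 : s ≤ σ i ^ 4 := by
          rw [hs]; exact pow_le_pow_left₀ (hσ0 ⟨p, hpq⟩) hle 4
        nlinarith [ht0 i]
    have hsum : (∑ i : Fin q, ((if p ≤ (i : ℕ) then σ i ^ 4 else 0) +
        s * (t i - (if p ≤ (i : ℕ) then (1:ℝ) else 0)))) ≤ ∑ i : Fin q, σ i ^ 4 * t i :=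
      Finset.sum_le_sum fun i _ => hkey i
    rw [Finset.sum_add_distrib] at hsum
    have hind : ∑ i : Fin q, (if p ≤ (i : ℕ) then (1:ℝ) else 0) = (q : ℝ) - (p : ℝ) := by
      rw [Fin.sum_univ_eq_sum_range (fun i => if p ≤ i then (1:ℝ) else 0) q]
      rw [← Finset.sum_filter]
      have hf : (Finset.range q).filter (fun i => p ≤ i) = Finset.Ico p q := by
        ext a
        simp only [Finset.mem_filter, Finset.mem_range, Finset.mem_Ico]
        omega
      rw [hf, Finset.sum_const, Nat.card_Ico, nsmul_eq_mul, mul_one, Nat.cast_sub hpq.le]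
    have hfac : ∑ i : Fin q, s * (t i - (if p ≤ (i : ℕ) then (1:ℝ) else 0)) =
        s * ((∑ i, t i) - ((q:ℝ) - (p:ℝ))) := by
      rw [← Finset.mul_sum]
      congr 1
      rw [Finset.sum_sub_distrib, hind]
    rw [hfac] at hsum
    have : 0 ≤ s * ((∑ i, t i) - ((q:ℝ) - (p:ℝ))) := by
      apply mul_nonneg hs0
      linarith
    linarith
  · push_neg at hpq
    have hz : ∑ i : Fin q, (if p ≤ (i : ℕ) then σ i ^ 4 else 0) = 0 := by
      refine Finset.sum_eq_zero fun i _ => ?_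
      have : ¬ p ≤ (i : ℕ) := by omega
      simp [this]
    rw [hz]
    exact Finset.sum_nonneg fun i _ => mul_nonneg (pow_nonneg (hσ0 i) 4) (ht0 i)
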